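/- arXiv:2101.00617 — 2 statements merged into one kernel-verified Lean document; each statement's English description precedes it below -/
import Mathlib

section
/- For n ∈ {2, 3}, the size multipartite Ramsey number m_3(K_{1,2}, P_4, nK_2) equals n. That is, n is the smallest positive integer t such that every 3-coloring of the edges of K_{3×t} contains a copy of K_{1,2} in the first color, or a copy of P_4 in the second color, or a matching nK_2 in the third color. -/
open SimpleGraph

/-- The complete multipartite graph `K_{j x t}` with `j` parts, each of size `t`. -/
def multiK (j t : ℕ) : SimpleGraph (Fin j × Fin t) where
  Adj a b := a.1 ≠ b.1
  symm := ⟨fun _ _ h => Ne.symm h⟩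
  loopless := ⟨fun _ h => h rfl⟩

/-- `G` contains a copy of `H`. -/
def Contains {α β : Type*} (G : SimpleGraph α) (H : SimpleGraph β) : Prop :=
  ∃ f : β → α, Function.Injective f ∧ ∀ ⦃a b⦄, H.Adj a b → G.Adj (f a) (f b)

/-- The monochromatic subgraph of `G` in color `i` under the edge-coloring `c`. -/
def colorClass {α : Type*} {k : ℕ} (G : SimpleGraph α) (c : Sym2 α → Fin k) (i : Fin k) :
    SimpleGraph α where
  Adj a b := G.Adj a b ∧ c s(a, b) = i
  symm := ⟨fun _ _ h => ⟨h.1.symm, by rw [Sym2.eq_swap]; exact h.2⟩⟩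
  loopless := ⟨fun a h => G.loopless.1 a h.1⟩

/-- The stripe `nK₂`: the graph consisting of `n` pairwise disjoint edges. -/
def stripe (n : ℕ) : SimpleGraph (Fin n × Fin 2) where
  Adj a b := a.1 = b.1 ∧ a.2 ≠ b.2
  symm := ⟨fun _ _ h => ⟨h.1.symm, h.2.symm⟩⟩
  loopless := ⟨fun _ h => h.2 rfl⟩

/-- Every 3-coloring of the edges of `K_{j x t}` yields a copy of `K_{1,2}` in color 0,
or of `P₄` in color 1, or of `nK₂` in color 2. -/
def Arrows3 (j t n : ℕ) : Prop :=
  ∀ c : Sym2 (Fin j × Fin t) → Fin 3,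
    Contains (colorClass (multiK j t) c 0) (pathGraph 3) ∨
    Contains (colorClass (multiK j t) c 1) (pathGraph 4) ∨
    Contains (colorClass (multiK j t) c 2) (stripe n)

/-- Every 2-coloring of the edges of `K_{j x t}` yields a copy of `nK₂` in color 0
or of `C₇` in color 1. -/
def ArrowsC7 (j t n : ℕ) : Prop :=
  ∀ c : Sym2 (Fin j × Fin t) → Fin 2,
    Contains (colorClass (multiK j t) c 0) (stripe n) ∨
    Contains (colorClass (multiK j t) c 1) (cycleGraph 7)


/-!
A diamond is `K₄` minus an edge. If none of its five edges has color 2, color 0 can only be a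
matching of the diamond (otherwise it contains `K_{1,2}`), and the complement of every such
matching contains a `P₄`, which then has color 1. Hence a color-2 matching that avoids a diamond
either grows by an edge of the diamond or we find `K_{1,2}` in color 0 or `P₄` in color 1.

In `K_{3×2}`, applied to any diamond this gives a first color-2 edge; the four vertices off that
edge form a diamond, which gives a second. In `K_{3×3}`, a color-2 `2K₂` found in the first two
columns (second coordinates `0, 1`) misses one of their six vertices `u`, and `u` together with
the last column spans a diamond.

For the lower bounds, give color 2 to the edges at part 0 and color the edges between parts 1
and 2 by 0 or 1 according as their ends lie in the same column or not. For `t ≤ 2`, colors 0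
and 1 are matchings, and the `t` vertices of part 0 cover every edge of color 2.
-/

section

variable {α : Type*}

@[simp] lemma multiK_adj {j t : ℕ} {a b : Fin j × Fin t} : (multiK j t).Adj a b ↔ a.1 ≠ b.1 :=
  Iff.rfl

@[simp] lemma colorClass_adj {k : ℕ} {G : SimpleGraph α} {c : Sym2 α → Fin k} {i : Fin k}
    {a b : α} : (colorClass G c i).Adj a b ↔ G.Adj a b ∧ c s(a, b) = i :=
  Iff.rfl

lemma contains_pathGraph_three {G : SimpleGraph α} {x v y : α} (hxv : G.Adj x v)
    (hvy : G.Adj v y) (hxy : x ≠ y) : Contains G (pathGraph 3) := by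
  have := hxv.ne; have := hvy.ne
  refine ⟨![x, v, y], ?_, ?_⟩
  · intro a b hab
    fin_cases a <;> fin_cases b <;> simp_all [eq_comm]
  · intro a b hab
    rw [pathGraph_adj] at hab
    fin_cases a <;> fin_cases b <;> simp_all [G.adj_comm]

lemma contains_pathGraph_four {G : SimpleGraph α} {w x y z : α} (hwx : G.Adj w x)
    (hxy : G.Adj x y) (hyz : G.Adj y z) (hwy : w ≠ y) (hwz : w ≠ z) (hxz : x ≠ z) :
    Contains G (pathGraph 4) := by
  have := hwx.ne; have := hxy.ne; have := hyz.ne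
  refine ⟨![w, x, y, z], ?_, ?_⟩
  · intro a b hab
    fin_cases a <;> fin_cases b <;> simp_all [eq_comm]
  · intro a b hab
    rw [pathGraph_adj] at hab
    fin_cases a <;> fin_cases b <;> simp_all [G.adj_comm]

lemma not_contains_pathGraph_of_adj_unique {H : SimpleGraph α}
    (hH : ∀ ⦃v x y⦄, H.Adj v x → H.Adj v y → x = y) {k : ℕ} (hk : 3 ≤ k) :
    ¬ Contains H (pathGraph k) := by
  rintro ⟨f, hf, hfH⟩
  have h02 := hf (hH (hfH (a := ⟨1, by omega⟩) (b := ⟨0, by omega⟩) (by simp [pathGraph_adj]))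
    (hfH (b := ⟨2, by omega⟩) (by simp [pathGraph_adj])))
  simp [Fin.ext_iff] at h02

lemma contains_stripe_succ {H : SimpleGraph α} {m : ℕ} {f : Fin m × Fin 2 → α}
    (hf : Function.Injective f) (hfH : ∀ ⦃a b⦄, (stripe m).Adj a b → H.Adj (f a) (f b))
    {x y : α} (hxy : H.Adj x y) (hx : x ∉ Set.range f) (hy : y ∉ Set.range f) :
    Contains H (stripe (m + 1)) := by
  simp only [Set.mem_range, not_exists] at hx hy
  refine ⟨fun v => Fin.cases (![x, y] v.2) (fun i => f (i, v.2)) v.1, ?_, ?_⟩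
  · rintro ⟨i, k⟩ ⟨i', k'⟩ h
    induction i using Fin.cases <;> induction i' using Fin.cases <;> fin_cases k <;>
      fin_cases k' <;> simp_all [hxy.ne, hxy.ne.symm, Ne.symm (hx _), Ne.symm (hy _), hf.eq_iff]
  · rintro ⟨i, k⟩ ⟨i', k'⟩ ⟨hii', hkk'⟩
    dsimp only at hii' hkk'
    subst hii'
    induction i using Fin.cases
    · fin_cases k <;> fin_cases k' <;> simp_all [H.adj_comm]
    · exact hfH ⟨rfl, hkk'⟩

lemma Contains.stripe_le_card_of_cover {H : SimpleGraph α} {S : Finset α}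
    (hS : ∀ ⦃a b⦄, H.Adj a b → a ∈ S ∨ b ∈ S) {n : ℕ} (h : Contains H (stripe n)) :
    n ≤ S.card := by
  obtain ⟨f, hf, hfH⟩ := h
  have hmeet : ∀ i, ∃ k, f (i, k) ∈ S := fun i =>
    (hS (hfH (a := (i, 0)) (b := (i, 1)) ⟨rfl, zero_ne_one⟩)).elim (⟨0, ·⟩) (⟨1, ·⟩)
  choose k hk using hmeet
  simpa using Finset.card_le_card_of_injOn (s := Finset.univ) (fun i => f (i, k i))
    (fun i _ => hk i) (fun i _ j _ h => congrArg Prod.fst (hf h))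

lemma colorClass_adj_comap {β : Type*} {k : ℕ} {G : SimpleGraph α} {G' : SimpleGraph β}
    {φ : α → β} (hφ : ∀ ⦃a b⦄, G.Adj a b → G'.Adj (φ a) (φ b)) {c : Sym2 β → Fin k}
    {i : Fin k} {a b : α} (h : (colorClass G (c ∘ Sym2.map φ) i).Adj a b) :
    (colorClass G' c i).Adj (φ a) (φ b) :=
  ⟨hφ h.1, h.2⟩

lemma Contains.map_colorClass {β γ : Type*} {k : ℕ} {G : SimpleGraph α} {G' : SimpleGraph β}
    {H : SimpleGraph γ} {φ : α → β} (hφ : Function.Injective φ)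
    (hφG : ∀ ⦃a b⦄, G.Adj a b → G'.Adj (φ a) (φ b)) {c : Sym2 β → Fin k} {i : Fin k}
    (h : Contains (colorClass G (c ∘ Sym2.map φ) i) H) : Contains (colorClass G' c i) H :=
  let ⟨f, hf, hfH⟩ := h
  ⟨φ ∘ f, hφ.comp hf, fun _ _ hab => colorClass_adj_comap hφG (hfH hab)⟩

def IsDiamond (G : SimpleGraph α) (p q r s : α) : Prop :=
  G.Adj p q ∧ G.Adj p r ∧ G.Adj p s ∧ G.Adj q r ∧ G.Adj q s ∧ r ≠ s

namespace IsDiamond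

variable {G : SimpleGraph α} {c : Sym2 α → Fin 3} {p q r s : α}

lemma contains_paths (hD : IsDiamond G p q r s) (hpq : c s(p, q) ≠ 2) (hpr : c s(p, r) ≠ 2)
    (hps : c s(p, s) ≠ 2) (hqr : c s(q, r) ≠ 2) (hqs : c s(q, s) ≠ 2) :
    Contains (colorClass G c 0) (pathGraph 3) ∨ Contains (colorClass G c 1) (pathGraph 4) := by
  obtain ⟨apq, apr, aps, aqr, aqs, nrs⟩ := hD
  by_contra! ⟨h0, h1⟩
  set H0 := colorClass G c 0
  set H1 := colorClass G c 1
  have P3 : ∀ {x v y}, H0.Adj x v → H0.Adj v y → x ≠ y → False :=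
    fun hxv hvy hxy => h0 (contains_pathGraph_three hxv hvy hxy)
  have P4 : ∀ {w x y z}, H1.Adj w x → H1.Adj x y → H1.Adj y z → w ≠ y → w ≠ z → x ≠ z → False :=
    fun hwx hxy hyz hwy hwz hxz => h1 (contains_pathGraph_four hwx hxy hyz hwy hwz hxz)
  have at_p₁ : ¬ (c s(p, q) = 0 ∧ c s(p, r) = 0) := fun ⟨e, e'⟩ =>
    P3 (H0.adj_symm ⟨apq, e⟩) ⟨apr, e'⟩ aqr.ne
  have at_p₂ : ¬ (c s(p, q) = 0 ∧ c s(p, s) = 0) := fun ⟨e, e'⟩ =>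
    P3 (H0.adj_symm ⟨apq, e⟩) ⟨aps, e'⟩ aqs.ne
  have at_p₃ : ¬ (c s(p, r) = 0 ∧ c s(p, s) = 0) := fun ⟨e, e'⟩ =>
    P3 (H0.adj_symm ⟨apr, e⟩) ⟨aps, e'⟩ nrs
  have at_q₁ : ¬ (c s(p, q) = 0 ∧ c s(q, r) = 0) := fun ⟨e, e'⟩ =>
    P3 ⟨apq, e⟩ ⟨aqr, e'⟩ apr.ne
  have at_q₂ : ¬ (c s(p, q) = 0 ∧ c s(q, s) = 0) := fun ⟨e, e'⟩ =>
    P3 ⟨apq, e⟩ ⟨aqs, e'⟩ aps.ne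
  have at_q₃ : ¬ (c s(q, r) = 0 ∧ c s(q, s) = 0) := fun ⟨e, e'⟩ =>
    P3 (H0.adj_symm ⟨aqr, e⟩) ⟨aqs, e'⟩ nrs
  have at_r : ¬ (c s(p, r) = 0 ∧ c s(q, r) = 0) := fun ⟨e, e'⟩ =>
    P3 ⟨apr, e⟩ (H0.adj_symm ⟨aqr, e'⟩) apq.ne
  have at_s : ¬ (c s(p, s) = 0 ∧ c s(q, s) = 0) := fun ⟨e, e'⟩ =>
    P3 ⟨aps, e⟩ (H0.adj_symm ⟨aqs, e'⟩) apq.ne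
  have rpqs : ¬ (c s(p, r) = 1 ∧ c s(p, q) = 1 ∧ c s(q, s) = 1) := fun ⟨e, e', e''⟩ =>
    P4 (H1.adj_symm ⟨apr, e⟩) ⟨apq, e'⟩ ⟨aqs, e''⟩ aqr.ne.symm nrs aps.ne
  have spqr : ¬ (c s(p, s) = 1 ∧ c s(p, q) = 1 ∧ c s(q, r) = 1) := fun ⟨e, e', e''⟩ =>
    P4 (H1.adj_symm ⟨aps, e⟩) ⟨apq, e'⟩ ⟨aqr, e''⟩ aqs.ne.symm nrs.symm apr.ne
  have rpsq : ¬ (c s(p, r) = 1 ∧ c s(p, s) = 1 ∧ c s(q, s) = 1) := fun ⟨e, e', e''⟩ =>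
    P4 (H1.adj_symm ⟨apr, e⟩) ⟨aps, e'⟩ (H1.adj_symm ⟨aqs, e''⟩) nrs aqr.ne.symm apq.ne
  grind

lemma contains_or_stripe_succ (hD : IsDiamond G p q r s) {m : ℕ} {f : Fin m × Fin 2 → α}
    (hf : Function.Injective f)
    (hfc : ∀ ⦃a b⦄, (stripe m).Adj a b → (colorClass G c 2).Adj (f a) (f b))
    (hfD : ∀ a, f a ∉ ({p, q, r, s} : Set α)) :
    Contains (colorClass G c 0) (pathGraph 3) ∨ Contains (colorClass G c 1) (pathGraph 4) ∨
      Contains (colorClass G c 2) (stripe (m + 1)) := by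
  rw [← or_assoc, or_iff_not_imp_right]
  intro hS
  have hc : ∀ {x y}, G.Adj x y → x ∈ ({p, q, r, s} : Set α) → y ∈ ({p, q, r, s} : Set α) →
      c s(x, y) ≠ 2 := fun hxy hx hy h2 =>
    hS (contains_stripe_succ hf hfc ⟨hxy, h2⟩ (fun ⟨a, ha⟩ => hfD a (ha ▸ hx))
      (fun ⟨a, ha⟩ => hfD a (ha ▸ hy)))
  have ⟨apq, apr, aps, aqr, aqs, _⟩ := hD
  exact hD.contains_paths (hc apq (by simp) (by simp)) (hc apr (by simp) (by simp))
    (hc aps (by simp) (by simp)) (hc aqr (by simp) (by simp)) (hc aqs (by simp) (by simp))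

end IsDiamond

end

lemma exists_isDiamond_avoiding (x y : Fin 3 × Fin 2) (h : x.1 ≠ y.1) :
    ∃ p q r s, IsDiamond (multiK 3 2) p q r s ∧
      x ∉ ({p, q, r, s} : Set (Fin 3 × Fin 2)) ∧ y ∉ ({p, q, r, s} : Set (Fin 3 × Fin 2)) := by
  -- the partners of `x` and `y` in their parts, and the third part `-(x.1 + y.1)`
  refine ⟨(x.1, x.2 + 1), (y.1, y.2 + 1), (-(x.1 + y.1), 0), (-(x.1 + y.1), 1), ?_⟩
  simp only [IsDiamond, multiK_adj, Set.mem_insert_iff, Set.mem_singleton_iff]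
  refine ⟨⟨h, ?_, ?_, ?_, ?_, ?_⟩, ?_, ?_⟩ <;> revert x y <;> decide

lemma isDiamond_castSucc (u : Fin 3 × Fin 2) :
    IsDiamond (multiK 3 3) (u.1 + 1, 2) (u.1 + 2, 2) (u.1, 2) (Prod.map id Fin.castSucc u) := by
  simp only [IsDiamond, multiK_adj]
  revert u
  decide

lemma castSucc_notMem_diamond {u w : Fin 3 × Fin 2} (h : w ≠ u) :
    Prod.map id Fin.castSucc w ∉ ({(u.1 + 1, 2), (u.1 + 2, 2), (u.1, 2),
      Prod.map id Fin.castSucc u} : Set (Fin 3 × Fin 3)) := by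
  simp only [Set.mem_insert_iff, Set.mem_singleton_iff]
  revert u w
  decide

theorem arrows3_two_two : Arrows3 3 2 2 := by
  intro c
  obtain ⟨p, q, r, s, hD, -⟩ := exists_isDiamond_avoiding (0, 0) (1, 0) (by decide)
  rcases hD.contains_or_stripe_succ (f := (isEmptyElim : Fin 0 × Fin 2 → _))
    (Function.injective_of_subsingleton _) isEmptyElim isEmptyElim with h | h | ⟨f, hf, hfc⟩
  · exact Or.inl h
  · exact Or.inr (Or.inl h)
  obtain ⟨hxy, -⟩ := hfc (a := (0, 0)) (b := (0, 1)) ⟨rfl, by decide⟩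
  obtain ⟨p, q, r, s, hD, hx, hy⟩ := exists_isDiamond_avoiding _ _ hxy
  refine hD.contains_or_stripe_succ hf hfc ?_
  rintro ⟨i, k⟩
  fin_cases i; fin_cases k
  exacts [hx, hy]

theorem arrows3_three_three : Arrows3 3 3 3 := by
  intro c
  have hφ : ∀ ⦃a b⦄, (multiK 3 2).Adj a b →
      (multiK 3 3).Adj (Prod.map id Fin.castSucc a) (Prod.map id Fin.castSucc b) :=
    fun _ _ h => h
  have hφinj : Function.Injective (Prod.map id Fin.castSucc : Fin 3 × Fin 2 → Fin 3 × Fin 3) :=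
    Function.injective_id.prodMap (Fin.castSucc_injective 2)
  rcases arrows3_two_two (c ∘ Sym2.map (Prod.map id Fin.castSucc)) with h | h | ⟨f, hf, hfc⟩
  · exact Or.inl (h.map_colorClass hφinj hφ)
  · exact Or.inr (Or.inl (h.map_colorClass hφinj hφ))
  obtain ⟨u, hu⟩ : ∃ u, u ∉ Set.range f := by
    by_contra! hsurj
    simpa using Fintype.card_le_of_surjective f hsurj
  exact (isDiamond_castSucc u).contains_or_stripe_succ (hφinj.comp hf)
    (fun _ _ hab => colorClass_adj_comap hφ (hfc hab))
    (fun a => castSucc_notMem_diamond fun h => hu ⟨a, h⟩)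

def extremalColoring (t : ℕ) : Sym2 (Fin 3 × Fin t) → Fin 3 :=
  Sym2.lift ⟨fun v w => if v.1 = 0 ∨ w.1 = 0 then 2 else if v.2 = w.2 then 0 else 1,
    fun v w => by simp only [or_comm, eq_comm]⟩

section extremalColoring

variable {t : ℕ}

lemma extremalColoring_mk (v w : Fin 3 × Fin t) : extremalColoring t s(v, w) =
    if v.1 = 0 ∨ w.1 = 0 then 2 else if v.2 = w.2 then 0 else 1 :=
  rfl

lemma extremalColoring_zero_adj_unique ⦃v x y : Fin 3 × Fin t⦄
    (hx : (colorClass (multiK 3 t) (extremalColoring t) 0).Adj v x)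
    (hy : (colorClass (multiK 3 t) (extremalColoring t) 0).Adj v y) : x = y := by
  simp only [colorClass_adj, multiK_adj, extremalColoring_mk] at hx hy
  ext <;> grind

lemma extremalColoring_one_adj_unique (ht : t ≤ 2) ⦃v x y : Fin 3 × Fin t⦄
    (hx : (colorClass (multiK 3 t) (extremalColoring t) 1).Adj v x)
    (hy : (colorClass (multiK 3 t) (extremalColoring t) 1).Adj v y) : x = y := by
  simp only [colorClass_adj, multiK_adj, extremalColoring_mk] at hx hy
  ext <;> grind

lemma extremalColoring_two_cover ⦃a b : Fin 3 × Fin t⦄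
    (h : (colorClass (multiK 3 t) (extremalColoring t) 2).Adj a b) :
    a ∈ Finset.univ.map ⟨(0, ·), Prod.mk_right_injective 0⟩ ∨
      b ∈ Finset.univ.map ⟨(0, ·), Prod.mk_right_injective 0⟩ := by
  simp only [colorClass_adj, multiK_adj, extremalColoring_mk] at h
  simp only [Finset.mem_map, Finset.mem_univ, true_and, Function.Embedding.coeFn_mk]
  grind

end extremalColoring

lemma not_arrows3_of_le_two {t n : ℕ} (ht : t ≤ 2) (htn : t < n) : ¬ Arrows3 3 t n := by
  intro h
  rcases h (extremalColoring t) with h | h | h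
  · exact not_contains_pathGraph_of_adj_unique extremalColoring_zero_adj_unique le_rfl h
  · exact not_contains_pathGraph_of_adj_unique (extremalColoring_one_adj_unique ht) (by norm_num) h
  · have := h.stripe_le_card_of_cover extremalColoring_two_cover
    simp only [Finset.card_map, Finset.card_univ, Fintype.card_fin] at this
    omega

theorem stmt5 (n : ℕ) (hn : n = 2 ∨ n = 3) :
    IsLeast {t : ℕ | 0 < t ∧ Arrows3 3 t n} n := by
  refine ⟨⟨by omega, ?_⟩, fun t ⟨_, ht⟩ => ?_⟩
  · rcases hn with rfl | rfl
    exacts [arrows3_two_two, arrows3_three_three]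
  · by_contra! htn
    exact not_arrows3_of_le_two (by omega) htn ht
end

section
/- For all integers j ≥ 3 and n ≥ j, m_j(nK_2, C_7) ≥ ⌈(2n+2)/j⌉. Equivalently, with t₀ = ⌈(2n+2)/j⌉ − 1, there exists a 2-coloring of the edges of K_{j×t₀} containing no matching nK_2 in the first color and no cycle C_7 in the second color. -/
open SimpleGraph

/-!
Colour with the second colour exactly the edges meeting a fixed set `S` of three vertices.
That colour class then has a vertex cover of size 3, while covering the 7 edges of `C₇` takes
4 vertices; the first colour class lives on the other `|V| - 3` vertices, too few for `n`
disjoint edges as soon as `|V| ≤ 2n + 1`. For `t = ⌈(2n+2)/j⌉ - 1` one has `3 ≤ jt ≤ 2n + 1`.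
-/

open Finset

variable {V W : Type*}

lemma Contains.exists_cover_card_le {G : SimpleGraph V} {H : SimpleGraph W} [Fintype W]
    (hGH : Contains G H) (S : Finset V) (hS : ∀ a b, G.Adj a b → a ∈ S ∨ b ∈ S) :
    ∃ A : Finset W, #A ≤ #S ∧ ∀ a b, H.Adj a b → a ∈ A ∨ b ∈ A := by
  classical
  obtain ⟨f, hf, hadj⟩ := hGH
  refine ⟨univ.filter (f · ∈ S),
    card_le_card_of_injOn f (fun x hx => by simpa using hx) hf.injOn, ?_⟩
  intro a b hab
  simpa using hS _ _ (hadj hab)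

lemma cycleGraph_seven_cover_card (A : Finset (Fin 7))
    (hA : ∀ a b, (cycleGraph 7).Adj a b → a ∈ A ∨ b ∈ A) : 4 ≤ #A := by
  revert A
  set_option maxRecDepth 10000 in decide

lemma Contains.stripe_card_add_le [Fintype V] {G : SimpleGraph V} {n : ℕ}
    (h : Contains G (stripe n)) (S : Finset V) (hS : ∀ a b, G.Adj a b → a ∉ S) :
    2 * n + #S ≤ Fintype.card V := by
  obtain ⟨f, hf, hadj⟩ := h
  have hfS : ∀ x, f x ∉ S := fun ⟨i, e⟩ =>
    hS _ (f (i, e + 1)) (hadj ⟨rfl, by fin_cases e <;> simp⟩)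
  have hinj : Function.Injective (Sum.elim f ((↑) : S → V)) := by
    rintro (x | x) (y | y) hxy <;> simp only [Sum.elim_inl, Sum.elim_inr] at hxy
    · exact congrArg Sum.inl (hf hxy)
    · exact absurd (hxy ▸ y.2) (hfS x)
    · exact absurd (hxy ▸ x.2) (hfS y)
    · exact congrArg Sum.inr (Subtype.ext hxy)
  simpa [mul_comm] using Fintype.card_le_of_injective _ hinj

section SplitColoring

variable [DecidableEq V] (S : Finset V)

def splitColoring : Sym2 V → Fin 2 :=
  Sym2.lift ⟨fun a b => if a ∈ S ∨ b ∈ S then 1 else 0, fun a b => by simp only [or_comm]⟩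

lemma splitColoring_mk (a b : V) :
    splitColoring S s(a, b) = if a ∈ S ∨ b ∈ S then 1 else 0 := rfl

variable {G : SimpleGraph V}

lemma colorClass_splitColoring_zero_adj {a b : V}
    (h : (colorClass G (splitColoring S) 0).Adj a b) : a ∉ S := by
  have h0 := h.2
  rw [splitColoring_mk] at h0
  split_ifs at h0 with hab
  · exact absurd h0 (by decide)
  · exact fun ha => hab (Or.inl ha)

lemma colorClass_splitColoring_one_adj {a b : V}
    (h : (colorClass G (splitColoring S) 1).Adj a b) : a ∈ S ∨ b ∈ S := by
  have h1 := h.2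
  rw [splitColoring_mk] at h1
  split_ifs at h1 with hab
  · exact hab
  · exact absurd h1 (by decide)

end SplitColoring

theorem exists_coloring_not_contains_stripe_cycleGraph_seven [Fintype V] (G : SimpleGraph V)
    {n : ℕ} (h3 : 3 ≤ Fintype.card V) (hn : Fintype.card V ≤ 2 * n + 1) :
    ∃ c : Sym2 V → Fin 2,
      ¬ Contains (colorClass G c 0) (stripe n) ∧ ¬ Contains (colorClass G c 1) (cycleGraph 7) := by
  classical
  obtain ⟨S, -, hS⟩ := exists_subset_card_eq (s := (univ : Finset V)) h3
  refine ⟨splitColoring S, fun h => ?_, fun h => ?_⟩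
  · have := h.stripe_card_add_le S fun _ _ => colorClass_splitColoring_zero_adj S
    omega
  · obtain ⟨A, hAS, hA⟩ :=
      h.exists_cover_card_le S fun _ _ => colorClass_splitColoring_one_adj S
    have := cycleGraph_seven_cover_card A hA
    omega

lemma lt_add_sub_one_div_iff {m j t : ℕ} (hj : 0 < j) : t < (m + j - 1) / j ↔ j * t < m := by
  rw [Nat.lt_iff_add_one_le, Nat.le_div_iff_mul_le hj, Nat.add_mul, one_mul, mul_comm]
  omega

theorem stmt13 (j n : ℕ) (hj : 3 ≤ j) (hn : j ≤ n) :
    (∀ t : ℕ, 0 < t → ArrowsC7 j t n → (2 * n + 2 + j - 1) / j ≤ t) ∧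
    (∃ c : Sym2 (Fin j × Fin ((2 * n + 2 + j - 1) / j - 1)) → Fin 2,
      ¬ Contains (colorClass (multiK j ((2 * n + 2 + j - 1) / j - 1)) c 0) (stripe n) ∧
      ¬ Contains (colorClass (multiK j ((2 * n + 2 + j - 1) / j - 1)) c 1) (cycleGraph 7)) := by
  have hj0 : 0 < j := by omega
  have coloring : ∀ t, 0 < t → t < (2 * n + 2 + j - 1) / j →
      ∃ c : Sym2 (Fin j × Fin t) → Fin 2,
        ¬ Contains (colorClass (multiK j t) c 0) (stripe n) ∧
        ¬ Contains (colorClass (multiK j t) c 1) (cycleGraph 7) := by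
    intro t ht htq
    rw [lt_add_sub_one_div_iff hj0] at htq
    have hcard : Fintype.card (Fin j × Fin t) = j * t := by simp
    exact exists_coloring_not_contains_stripe_cycleGraph_seven (multiK j t)
      (by rw [hcard]; nlinarith) (by omega)
  have hq : 1 < (2 * n + 2 + j - 1) / j := (lt_add_sub_one_div_iff hj0).2 (by omega)
  refine ⟨fun t ht hArr => ?_, coloring _ (by omega) (by omega)⟩
  by_contra! htq
  obtain ⟨c, hc0, hc1⟩ := coloring t ht htq
  exact (hArr c).elim hc0 hc1
end
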